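/- arXiv:2312.14778 — 2 statements merged into one kernel-verified Lean document; each statement's English description precedes it below -/
import Mathlib

section
/- Vandermonde-type inequality for falling factorials: for real numbers x, y ≥ 0 and natural numbers a ≤ x, b ≤ y, one has C(a+b, a) · x^{falling a} · y^{falling b} ≤ (x+y)^{falling (a+b)}. -/
/-! Induct on `a + b`, peeling one factor off `x^{falling (a+1)} = x · (x-1)^{falling a}` or off
`y^{falling (b+1)}`. With `n = a + b`, peeling `x` replaces `C(n+1, a+1)` by `x (n+1) / (a+1) · C(n, a)`
against the factor `x + y` of `(x+y)^{falling (n+1)}`, which is affordable iff `x b ≤ y (a+1)`;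
symmetrically, peeling `y` needs `y a ≤ x (b+1)`. Comparing `x (b+1)` with `y (a+1)` shows that one
of the two always applies. -/

open Finset

/-- Falling factorial `x(x-1)⋯(x-n+1)`. -/
noncomputable def fallingF (x : ℝ) (n : ℕ) : ℝ := ∏ i ∈ Finset.range n, (x - (i : ℝ))

lemma fallingF_succ_eq_mul_fallingF_sub_one (x : ℝ) (n : ℕ) :
    fallingF x (n + 1) = x * fallingF (x - 1) n := by
  rw [fallingF, prod_range_succ', fallingF, mul_comm]
  congr 1
  · simp
  · exact prod_congr rfl fun i _ => by push_cast; ring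

lemma fallingF_nonneg {x : ℝ} {n : ℕ} (h : (n : ℝ) ≤ x) : 0 ≤ fallingF x n :=
  prod_nonneg fun i hi => by
    have : (i : ℝ) + 1 ≤ n := by exact_mod_cast mem_range.mp hi
    linarith

lemma choose_mul_fallingF_succ_left_le {x y : ℝ} {a b : ℕ} (ha : (a : ℝ) + 1 ≤ x)
    (hb : (b : ℝ) ≤ y) (hxy : x * b ≤ y * (a + 1))
    (ih : ((a + b).choose a : ℝ) * fallingF (x - 1) a * fallingF y b ≤
      fallingF (x + y - 1) (a + b)) :
    ((a + 1 + b).choose (a + 1) : ℝ) * fallingF x (a + 1) * fallingF y b ≤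
      fallingF (x + y) (a + 1 + b) := by
  have hpascal : ((a + b + 1).choose (a + 1) : ℝ) * (a + 1) = ((a + b).choose a) * (a + b + 1) := by
    exact_mod_cast (Nat.add_one_mul_choose_eq (a + b) a).symm.trans (mul_comm _ _)
  have hrest : 0 ≤ fallingF (x + y - 1) (a + b) := fallingF_nonneg (by push_cast; linarith)
  have hcost : x * (a + b + 1) ≤ (x + y) * (a + 1) := by linarith
  have hx : 0 ≤ x * (a + b + 1) := mul_nonneg (by linarith [a.cast_nonneg (α := ℝ)]) (by positivity)
  rw [add_right_comm, fallingF_succ_eq_mul_fallingF_sub_one, fallingF_succ_eq_mul_fallingF_sub_one]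
  refine le_of_mul_le_mul_right ?_ (by positivity : (0 : ℝ) < a + 1)
  calc ((a + b + 1).choose (a + 1) : ℝ) * (x * fallingF (x - 1) a) * fallingF y b * (a + 1)
      = x * (a + b + 1) * (((a + b).choose a : ℝ) * fallingF (x - 1) a * fallingF y b) := by
        linear_combination x * fallingF (x - 1) a * fallingF y b * hpascal
    _ ≤ x * (a + b + 1) * fallingF (x + y - 1) (a + b) := mul_le_mul_of_nonneg_left ih hx
    _ ≤ (x + y) * (a + 1) * fallingF (x + y - 1) (a + b) := mul_le_mul_of_nonneg_right hcost hrest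
    _ = (x + y) * fallingF (x + y - 1) (a + b) * (a + 1) := by ring

lemma exists_succ_left_or_succ_right {x y : ℝ} (hx : 0 ≤ x) (hy : 0 ≤ y) {a b n : ℕ}
    (h : a + b = n + 1) :
    (∃ a', a = a' + 1 ∧ x * b ≤ y * (a' + 1)) ∨ (∃ b', b = b' + 1 ∧ y * a ≤ x * (b' + 1)) := by
  rcases a with _ | a
  · obtain ⟨b, rfl⟩ : ∃ b', b = b' + 1 := ⟨n, by omega⟩
    exact .inr ⟨b, rfl, by simp only [CharP.cast_eq_zero, mul_zero]; positivity⟩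
  rcases b with _ | b
  · exact .inl ⟨a, rfl, by simp only [CharP.cast_eq_zero, mul_zero]; positivity⟩
  rcases le_total (x * (b + 1 : ℕ)) (y * (a + 1 : ℕ)) with hxy | hyx
  · exact .inl ⟨a, rfl, by exact_mod_cast hxy⟩
  · exact .inr ⟨b, rfl, by exact_mod_cast hyx⟩

theorem choose_mul_fallingF_le_general (x y : ℝ) (a b : ℕ)
    (ha : (a : ℝ) ≤ x) (hb : (b : ℝ) ≤ y) :
    ((a + b).choose a : ℝ) * fallingF x a * fallingF y b ≤ fallingF (x + y) (a + b) := by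
  obtain ⟨n, hn⟩ : ∃ n, a + b = n := ⟨_, rfl⟩
  induction n generalizing x y a b with
  | zero =>
    obtain ⟨rfl, rfl⟩ : a = 0 ∧ b = 0 := by omega
    simp [fallingF]
  | succ n ih =>
    have peel_left {x y : ℝ} {a b : ℕ} (hn : a + 1 + b = n + 1) (ha : (a : ℝ) + 1 ≤ x)
        (hb : (b : ℝ) ≤ y) (hxy : x * b ≤ y * (a + 1)) :
        ((a + 1 + b).choose (a + 1) : ℝ) * fallingF x (a + 1) * fallingF y b ≤
          fallingF (x + y) (a + 1 + b) :=
      choose_mul_fallingF_succ_left_le ha hb hxy <| by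
        simpa only [sub_add_eq_add_sub] using ih (x - 1) y a b (by linarith) hb (by omega)
    rcases exists_succ_left_or_succ_right (a.cast_nonneg.trans ha) (b.cast_nonneg.trans hb) hn
      with ⟨a, rfl, hxy⟩ | ⟨b, rfl, hyx⟩
    · exact peel_left hn (by exact_mod_cast ha) hb hxy
    · have := peel_left (by omega) (by exact_mod_cast hb) ha hyx
      rwa [add_comm y, add_comm (b + 1), ← Nat.choose_symm_add, mul_right_comm] at this

/-- Vandermonde-type inequality:
`C(a+b, a) · x^{falling a} · y^{falling b} ≤ (x+y)^{falling (a+b)}`. -/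
theorem choose_mul_fallingF_le (x y : ℝ) (hx : 0 ≤ x) (hy : 0 ≤ y) (a b : ℕ)
    (ha : (a : ℝ) ≤ x) (hb : (b : ℝ) ≤ y) :
    ((a + b).choose a : ℝ) * fallingF x a * fallingF y b ≤ fallingF (x + y) (a + b) :=
  choose_mul_fallingF_le_general x y a b ha hb
end

section
/- Bound on G_{s,r}: let s be a natural number, r an even natural number with 6 ≤ r ≤ s, and v, k integers with k ≥ 2s+1, v - k ≥ 2s+1 (hence v ≥ 4s+2). Define G_{s,r} := ((v-k-s)^{rising (r/2)} (k-s)^{rising (s - r/2 + 1)} (k-s)^{rising (s-r+1)}) / ((v-2s+1)^{rising s} (v-2s+1)^{rising (s - r/2)}). Then 2·ln G_{s,r} ≤ -(r-4)·ln(v-2s+1) - 2·ln C(2s-r+2, r/2) + 2(s-r)·ln 2. -/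
/-!
Write `a = v - k - s`, `b = k - s`, `m = v - 2s + 1 = a + b + 1`, `c = r / 2` and `x^(n)` for the
rising factorial. Since `2s - 3c + 2 = (s - c + 1) + (s - r + 1)`, the Chu–Vandermonde identity
bounds `C(2s-r+2, c) a^(c) b^(s-c+1) (b+s-c+1)^(s-r+1)` by
`(a+b)^(2s-r+2) = (a+b) m^(s) (m+s)^(s-r+1)`.
For `0 ≤ x ≤ y` and `δ ≥ 0` one has `x^(n) (y+δ)^(n) ≤ (x+δ)^(n) y^(n)` factor by factor; with
`x = b`, `y = m+c-1`, `δ = s-c+1` this exchanges `b^(s-r+1) (m+s)^(s-r+1)` for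
`(b+s-c+1)^(s-r+1) (m+c-1)^(s-r+1)`. Cancelling, with `m^(s-c) = m^(c-2) (m+c-2) (m+c-1)^(s-r+1)`
and the ordinary power `m ^ (c-2) ≤ m^(c-2)`, gives `G_{s,r} C(2s-r+2, c) m ^ (c-2) ≤ 1`, which
beats the claim by the factor `2^(s-r)`.
-/

open Finset Real

/-- Rising factorial `x(x+1)⋯(x+n-1)`. -/
noncomputable def risingF (x : ℝ) (n : ℕ) : ℝ := ∏ i ∈ Finset.range n, (x + (i : ℝ))

/-- The quantity `G_{s,r}` (eq:quadrantlike), with real arguments. -/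
noncomputable def Gsr (s r : ℕ) (v k : ℝ) : ℝ :=
  risingF (v - k - s) (r / 2) * risingF (k - s) (s - r / 2 + 1) * risingF (k - s) (s - r + 1)
    / (risingF (v - 2 * s + 1) s * risingF (v - 2 * s + 1) (s - r / 2))

namespace risingF

lemma succ (x : ℝ) (n : ℕ) : risingF x (n + 1) = risingF x n * (x + n) :=
  prod_range_succ _ _

lemma succ' (x : ℝ) (n : ℕ) : risingF x (n + 1) = x * risingF (x + 1) n := by
  simp only [risingF, prod_range_succ', Nat.cast_succ, Nat.cast_zero, add_zero, add_assoc,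
    add_comm (1 : ℝ), mul_comm]

lemma add (x : ℝ) (m n : ℕ) : risingF x (m + n) = risingF x m * risingF (x + m) n := by
  simp only [risingF, prod_range_add, Nat.cast_add, add_assoc]

lemma pos {x : ℝ} (hx : 0 < x) (n : ℕ) : 0 < risingF x n :=
  prod_pos fun i _ => by positivity

lemma nonneg {x : ℝ} (hx : 0 ≤ x) (n : ℕ) : 0 ≤ risingF x n :=
  prod_nonneg fun i _ => by positivity

lemma pow_le {x : ℝ} (hx : 0 ≤ x) (n : ℕ) : x ^ n ≤ risingF x n := by
  simpa [risingF] using prod_le_prod (s := range n) (fun _ _ => hx)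
    (fun i _ => le_add_of_nonneg_right (Nat.cast_nonneg i))

lemma add_eq_sum_antidiagonal (x y : ℝ) (n : ℕ) :
    risingF (x + y) n
      = ∑ ij ∈ antidiagonal n, (n.choose ij.1 : ℝ) * (risingF x ij.1 * risingF y ij.2) := by
  induction n with
  | zero => simp [risingF]
  | succ n ih =>
    rw [sum_antidiagonal_choose_succ_mul (fun i j => risingF x i * risingF y j),
      ← sum_add_distrib, succ, ih, sum_mul]
    refine sum_congr rfl fun ij hij => ?_
    have hn := mem_antidiagonal.1 hij
    rw [Nat.choose_symm_of_eq_add hn.symm, succ, succ, ← hn, Nat.cast_add]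
    ring

lemma choose_mul_mul_le_add {x y : ℝ} (hx : 0 ≤ x) (hy : 0 ≤ y) (p q : ℕ) :
    ((p + q).choose p : ℝ) * (risingF x p * risingF y q) ≤ risingF (x + y) (p + q) := by
  rw [add_eq_sum_antidiagonal]
  exact single_le_sum
    (f := fun ij : ℕ × ℕ => ((p + q).choose ij.1 : ℝ) * (risingF x ij.1 * risingF y ij.2))
    (fun ij _ => mul_nonneg (Nat.cast_nonneg _) (mul_nonneg (nonneg hx _) (nonneg hy _)))
    (mem_antidiagonal.2 rfl : (p, q) ∈ antidiagonal (p + q))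

lemma mul_add_le_add_mul {x y δ : ℝ} (hx : 0 ≤ x) (hxy : x ≤ y) (hδ : 0 ≤ δ) (n : ℕ) :
    risingF x n * risingF (y + δ) n ≤ risingF (x + δ) n * risingF y n := by
  simp only [risingF, ← prod_mul_distrib]
  refine prod_le_prod (fun i _ => ?_) fun i _ => ?_
  · have := hx.trans hxy
    positivity
  · nlinarith [mul_le_mul_of_nonneg_left hxy hδ]

end risingF

/-- The bound on `Gsr` in the variables `a = v - k - s`, `b = k - s`, `r = 2e + 4`,
`s = 2e + d + 4`, before the power `m ^ e` is bounded by the rising factorial. -/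
lemma choose_mul_risingF_le {a b : ℝ} (ha : 0 ≤ a) (hb : 0 < b) (e d : ℕ) :
    ((2 * e + 2 * d + 6).choose (e + 2) : ℝ)
        * (risingF a (e + 2) * risingF b (e + d + 3) * risingF b (d + 1))
      ≤ risingF (a + b + 1) (2 * e + d + 4) * risingF (a + b + 1 + e) (d + 2) := by
  have he : (0 : ℝ) ≤ e := e.cast_nonneg
  have hB : 0 < risingF (b + e + d + 3) (d + 1) := risingF.pos (by positivity) _
  have hsplit_b : risingF b (e + d + 3) * risingF (b + e + d + 3) (d + 1)
      = risingF b (e + 2 * d + 4) := by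
    rw [show e + 2 * d + 4 = e + d + 3 + (d + 1) by ring, risingF.add b (e + d + 3) (d + 1)]
    push_cast; ring_nf
  have hsplit_ab : risingF (a + b) (e + 2 + (e + 2 * d + 4)) = (a + b)
      * risingF (a + b + 1) (2 * e + d + 4) * risingF (a + b + 1 + 2 * e + d + 4) (d + 1) := by
    rw [show e + 2 + (e + 2 * d + 4) = 2 * e + d + 4 + 1 + (d + 1) by ring, risingF.add _ (_ + 1),
      risingF.succ']
    push_cast; ring_nf
  have hvand : ((2 * e + 2 * d + 6).choose (e + 2) : ℝ)
        * (risingF a (e + 2) * risingF b (e + 2 * d + 4))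
      ≤ (a + b) * risingF (a + b + 1) (2 * e + d + 4)
        * risingF (a + b + 1 + 2 * e + d + 4) (d + 1) := by
    rw [← hsplit_ab, show 2 * e + 2 * d + 6 = e + 2 + (e + 2 * d + 4) by ring]
    exact risingF.choose_mul_mul_le_add ha hb.le (e + 2) (e + 2 * d + 4)
  have hshift : risingF b (d + 1) * risingF (a + b + 1 + 2 * e + d + 4) (d + 1)
      ≤ risingF (b + e + d + 3) (d + 1) * risingF (a + b + 1 + e + 1) (d + 1) := by
    have h := risingF.mul_add_le_add_mul hb.le (y := a + b + 1 + e + 1) (δ := e + d + 3)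
      (by linarith) (by positivity) (d + 1)
    convert h using 3 <;> ring
  have hM : 0 ≤ risingF (a + b + 1) (2 * e + d + 4) := risingF.nonneg (by positivity) _
  refine le_of_mul_le_mul_right ?_ hB
  calc _ = ((2 * e + 2 * d + 6).choose (e + 2) : ℝ)
          * (risingF a (e + 2) * risingF b (e + 2 * d + 4)) * risingF b (d + 1) := by
        rw [← hsplit_b]; ring
    _ ≤ (a + b) * risingF (a + b + 1) (2 * e + d + 4)
          * risingF (a + b + 1 + 2 * e + d + 4) (d + 1) * risingF b (d + 1) :=
        mul_le_mul_of_nonneg_right hvand (risingF.pos hb _).le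
    _ = (a + b) * (risingF b (d + 1) * risingF (a + b + 1 + 2 * e + d + 4) (d + 1))
          * risingF (a + b + 1) (2 * e + d + 4) := by ring
    _ ≤ (a + b + 1 + e) * (risingF (b + e + d + 3) (d + 1) * risingF (a + b + 1 + e + 1) (d + 1))
          * risingF (a + b + 1) (2 * e + d + 4) := by
        refine mul_le_mul_of_nonneg_right (mul_le_mul (by linarith)
          hshift ?_ (by positivity)) hM
        exact mul_nonneg (risingF.pos hb _).le (risingF.pos (by positivity) _).le
    _ = _ := by rw [risingF.succ' (a + b + 1 + e)]; ring

lemma Gsr_pos {s r : ℕ} {v k : ℝ} (hk : s < k) (hvk : s < v - k) : 0 < Gsr s r v k := by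
  have ha : 0 < v - k - s := by linarith
  have hb : 0 < k - s := by linarith
  have hm : 0 < v - 2 * s + 1 := by linarith
  exact div_pos (mul_pos (mul_pos (risingF.pos ha _) (risingF.pos hb _)) (risingF.pos hb _))
    (mul_pos (risingF.pos hm _) (risingF.pos hm _))

lemma Gsr_mul_choose_mul_pow_le_one {s r : ℕ} (hr : Even r) (hr4 : 4 ≤ r) (hrs : r ≤ s)
    {v k : ℝ} (hk : s < k) (hvk : s < v - k) :
    Gsr s r v k * ((2 * s - r + 2).choose (r / 2) * (v - 2 * s + 1) ^ (r / 2 - 2)) ≤ 1 := by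
  obtain ⟨e, rfl⟩ : ∃ e, r = 2 * e + 4 := ⟨r / 2 - 2, by obtain ⟨c, rfl⟩ := hr; omega⟩
  obtain ⟨d, rfl⟩ : ∃ d, s = 2 * e + d + 4 := ⟨s - (2 * e + 4), by omega⟩
  rw [Gsr, show (2 * e + 4) / 2 = e + 2 by omega,
    show 2 * e + d + 4 - (e + 2) + 1 = e + d + 3 by omega,
    show 2 * e + d + 4 - (2 * e + 4) + 1 = d + 1 by omega,
    show 2 * (2 * e + d + 4) - (2 * e + 4) + 2 = 2 * e + 2 * d + 6 by omega,
    show e + 2 - 2 = e by omega, show 2 * e + d + 4 - (e + 2) = e + (d + 2) by omega,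
    show v - 2 * ((2 * e + d + 4 : ℕ) : ℝ) + 1
      = (v - k - (2 * e + d + 4 : ℕ)) + (k - (2 * e + d + 4 : ℕ)) + 1 by ring]
  have ha : 0 < v - k - (2 * e + d + 4 : ℕ) := by linarith
  have hb : 0 < k - (2 * e + d + 4 : ℕ) := by linarith
  generalize v - k - (2 * e + d + 4 : ℕ) = a at ha ⊢
  generalize k - (2 * e + d + 4 : ℕ) = b at hb ⊢
  have hm : 0 < a + b + 1 := by linarith
  rw [div_mul_eq_mul_div, div_le_one (mul_pos (risingF.pos hm _) (risingF.pos hm _)),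
    risingF.add _ e (d + 2)]
  calc _ = ((2 * e + 2 * d + 6).choose (e + 2) : ℝ)
        * (risingF a (e + 2) * risingF b (e + d + 3) * risingF b (d + 1)) * (a + b + 1) ^ e := by
        ring
    _ ≤ risingF (a + b + 1) (2 * e + d + 4) * risingF (a + b + 1 + e) (d + 2)
        * risingF (a + b + 1) e :=
      mul_le_mul (choose_mul_risingF_le ha.le hb e d) (risingF.pow_le hm.le e) (by positivity)
        (mul_nonneg (risingF.pos hm _).le (risingF.pos (by positivity) _).le)
    _ = _ := by ring

/-- The logarithmic upper bound on `G_{s,r}` (eq:unslumbering). -/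
theorem log_Gsr_bound (s r : ℕ) (hr : Even r) (hr6 : 6 ≤ r) (hrs : r ≤ s)
    (v k : ℤ) (hk : 2 * (s : ℤ) + 1 ≤ k) (hvk : 2 * (s : ℤ) + 1 ≤ v - k) :
    2 * Real.log (Gsr s r (v : ℝ) (k : ℝ))
      ≤ -((r : ℝ) - 4) * Real.log ((v : ℝ) - 2 * s + 1)
        - 2 * Real.log ((2 * s - r + 2).choose (r / 2) : ℝ)
        + 2 * ((s : ℝ) - r) * Real.log 2 := by
  have hk' : (s : ℝ) < k := by exact_mod_cast (by omega : (s : ℤ) < k)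
  have hvk' : (s : ℝ) < v - k := by exact_mod_cast (by omega : (s : ℤ) < v - k)
  have hm : 0 < (v : ℝ) - 2 * s + 1 := by linarith
  have hC : 0 < ((2 * s - r + 2).choose (r / 2) : ℝ) := by
    exact_mod_cast Nat.choose_pos (by omega)
  have hG := Gsr_pos (r := r) hk' hvk'
  have hlog := Real.log_le_log (mul_pos hG (mul_pos hC (pow_pos hm _)))
    (Gsr_mul_choose_mul_pow_le_one hr (by omega) hrs hk' hvk')
  rw [Real.log_one, Real.log_mul hG.ne' (by positivity),
    Real.log_mul hC.ne' (by positivity), Real.log_pow] at hlog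
  have hr2 : ((r / 2 - 2 : ℕ) : ℝ) = ((r : ℝ) - 4) / 2 := by
    obtain ⟨c, rfl⟩ := hr
    rw [Nat.cast_sub (by omega), show (c + c) / 2 = c by omega]
    push_cast; ring
  have hsr : 0 ≤ ((s : ℝ) - r) * Real.log 2 :=
    mul_nonneg (sub_nonneg.2 (by exact_mod_cast hrs)) (Real.log_nonneg one_le_two)
  rw [hr2] at hlog
  linarith
end
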